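/- arXiv:1311.7038 — 2 statements merged into one kernel-verified Lean document; each statement's English description precedes it below -/
import Mathlib

section
/- Assume x₀ has full orbit under G, G acts nontrivially on x₀, and fix a subgroup sequence {1} = G₀ < G₁ < ⋯ < G_m = G with coset leader sets CL_k. If for every 1 ≤ k < m every induced coset leader in CL(G/G_k) is minimal, then the subgroup decoding algorithm decodes correctly with some noise: there exists δ > 0 such that for every g ∈ G and every received vector r with ‖r − g⁻¹x₀‖ < δ/2, every greedy run on r has output equal to g. -/
/-!
Let `δ` be the least positive gap between the distances `‖a x₀ - x₀‖`, `a ∈ G`, and write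
`g = c_m ⋯ c_1` with `c_i ∈ CL_i`. If the first `k` greedy steps chose `c_1, …, c_k`, then
`z = c_k ⋯ c_1 r` lies within `δ / 2` of `(c_m ⋯ c_{k+1})⁻¹ x₀`. So `c_{k+1} z` lies within `δ / 2`
of `y = (c_m ⋯ c_{k+2})⁻¹ x₀`, while any other leader `d` sends `z` within `δ / 2` of `h y` with
`h = d c_{k+1}⁻¹ ∈ G_{k+1}`, `h ≠ 1`. Minimality puts `y` in the fundamental region of `G_{k+1}`, and
by full orbit `h` moves `x₀`, so `‖h y - x₀‖ > ‖y - x₀‖`, hence by at least `δ`: the greedy step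
picks `c_{k+1}`.
-/

open Set
open scoped Pointwise

noncomputable section

namespace GroupCode

variable {V : Type*} [NormedAddCommGroup V] [InnerProductSpace ℂ V]

/-- The group of linear isometries of a complex inner product space. -/
abbrev Iso (V : Type*) [NormedAddCommGroup V] [InnerProductSpace ℂ V] := V ≃ₗᵢ[ℂ] V

/-- The stabilizer (isotropy) of `x₀` inside a subgroup `H`. -/
def Stab (x₀ : V) (H : Subgroup (Iso V)) : Set (Iso V) := {h | h ∈ H ∧ h x₀ = x₀}

/-- The fundamental region of a subgroup `H`. -/
def FR (x₀ : V) (H : Subgroup (Iso V)) : Set V :=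
  {x | ∀ h ∈ H, h ∉ Stab x₀ H → ‖x - x₀‖ < ‖h x - x₀‖}

/-- The decoding region of a group element `g ∈ G`. -/
def DR (x₀ : V) (G : Subgroup (Iso V)) (g : Iso V) : Set V :=
  {x | ∀ a ∈ G, a ∉ Stab x₀ G * ({g} : Set (Iso V)) → ‖g x - x₀‖ < ‖a x - x₀‖}

/-- `CL` is a set of coset leaders for `K` over `H`: a subset of `K` containing `1` and
exactly one element of each left coset of `H` in `K`. -/
def IsCosetLeaders (H K : Subgroup (Iso V)) (CL : Set (Iso V)) : Prop :=
  CL ⊆ (K : Set (Iso V)) ∧ (1 : Iso V) ∈ CL ∧ ∀ a ∈ K, ∃! c, c ∈ CL ∧ c⁻¹ * a ∈ H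

/-- Greed compatibility of a set of coset leaders for `K` over `H`. -/
def GreedCompatible (x₀ : V) (H K : Subgroup (Iso V)) (CL : Set (Iso V)) : Prop :=
  ∀ x ∈ FR x₀ H, ∃ c ∈ CL, c x ∈ FR x₀ K

/-- A coset leader `c` of `K` over `H` is minimal if `x₀ ∈ c(FR(H))`. -/
def Minimal (x₀ : V) (H : Subgroup (Iso V)) (c : Iso V) : Prop :=
  x₀ ∈ ⇑c '' FR x₀ H

/-- A coset leader `c` of `K` over `H` is region minimal if `FR(K) ⊆ c(FR(H))`. -/
def RegionMinimal (x₀ : V) (H K : Subgroup (Iso V)) (c : Iso V) : Prop :=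
  FR x₀ K ⊆ ⇑c '' FR x₀ H

/-- The product `d_k ⋯ d_1`. -/
def pprod {α : Type*} [Monoid α] (d : ℕ → α) (k : ℕ) : α :=
  (List.range k).foldl (fun acc j => d (j + 1) * acc) 1

/-- The product `cs_ℓ ⋯ cs_{k+1}` of induced coset leaders. -/
def pprodRange {α : Type*} [Monoid α] (cs : ℕ → α) (k ℓ : ℕ) : α :=
  (List.range (ℓ - k)).foldl (fun acc j => cs (k + 1 + j) * acc) 1

/-- A greedy run of the subgroup decoding algorithm on a received vector `r`:
at each step `k`, `d k ∈ CL k` minimizes the distance of `d (d_{k-1} ⋯ d_1 r)` to `x₀`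
over all `d ∈ CL k`. -/
def IsGreedyRun (x₀ : V) (CL : ℕ → Set (Iso V)) (m : ℕ) (r : V) (d : ℕ → Iso V) : Prop :=
  ∀ k < m, d (k + 1) ∈ CL (k + 1) ∧
    ∀ e ∈ CL (k + 1), ‖(d (k + 1)) ((pprod d k) r) - x₀‖ ≤ ‖e ((pprod d k) r) - x₀‖

end GroupCode

theorem List.foldl_mul_left_eq_foldl_one_mul {α : Type*} [Monoid α] (g : ℕ → α) (l : List ℕ)
    (a : α) :
    l.foldl (fun acc j => g j * acc) a = l.foldl (fun acc j => g j * acc) 1 * a := by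
  induction l generalizing a with
  | nil => simp
  | cons j l ih => rw [List.foldl_cons, List.foldl_cons, ih (g j * a), ih (g j * 1), mul_one,
      mul_assoc]

theorem Set.Finite.exists_pos_add_le_of_lt {α : Type*} [AddCommGroup α] [LinearOrder α]
    [IsOrderedAddMonoid α] [Nontrivial α] {s : Set α} (hs : s.Finite) :
    ∃ δ > 0, ∀ a ∈ s, ∀ b ∈ s, a < b → a + δ ≤ b := by
  classical
  obtain ⟨ε, hε⟩ := exists_zero_lt (α := α)
  let gaps : Finset α := insert ε
    (((hs.toFinset ×ˢ hs.toFinset).filter fun p => p.1 < p.2).image fun p => p.2 - p.1)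
  refine ⟨gaps.min' (Finset.insert_nonempty _ _), ?_, fun a ha b hb hab => ?_⟩
  · simp only [gt_iff_lt, Finset.lt_min'_iff, gaps, Finset.mem_insert, Finset.mem_image,
      Finset.mem_filter]
    rintro _ (rfl | ⟨p, ⟨-, hp⟩, rfl⟩)
    exacts [hε, sub_pos.2 hp]
  · have := gaps.min'_le (b - a) (Finset.mem_insert_of_mem (Finset.mem_image.2
      ⟨(a, b), Finset.mem_filter.2 ⟨by simp [ha, hb], hab⟩, rfl⟩))
    exact le_sub_iff_add_le'.1 this

theorem le_of_forall_le_succ_of_le {α : Type*} [Preorder α] {f : ℕ → α} {m : ℕ}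
    (hf : ∀ k < m, f k ≤ f (k + 1)) {i : ℕ} (hi : i ≤ m) : f i ≤ f m := by
  induction m, hi using Nat.le_induction with
  | base => exact le_rfl
  | succ n _ ih => exact (ih fun k hk => hf k (by omega)).trans (hf n (by omega))

theorem norm_sub_lt_norm_sub_of_add_le {E : Type*} [SeminormedAddCommGroup E] {f g : E → E}
    (hf : Isometry f) (hg : Isometry g) {x₀ y z : E} {δ : ℝ} (hz : ‖z - y‖ < δ / 2)
    (hgap : ‖f y - x₀‖ + δ ≤ ‖g y - x₀‖) : ‖f z - x₀‖ < ‖g z - x₀‖ := by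
  have hf' : ‖f z - f y‖ = ‖z - y‖ := by rw [← dist_eq_norm, hf.dist_eq, dist_eq_norm]
  have hg' : ‖g y - g z‖ = ‖z - y‖ := by rw [← dist_eq_norm, hg.dist_eq, dist_comm, dist_eq_norm]
  linarith [norm_sub_le_norm_sub_add_norm_sub (f z) (f y) x₀,
    norm_sub_le_norm_sub_add_norm_sub (g y) (g z) x₀]

namespace GroupCode

section Products

variable {α : Type*} [Monoid α]

theorem pprod_zero (d : ℕ → α) : pprod d 0 = 1 := rfl

theorem pprod_succ (d : ℕ → α) (k : ℕ) : pprod d (k + 1) = d (k + 1) * pprod d k := by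
  simp only [pprod, List.range_succ, List.foldl_append, List.foldl_cons, List.foldl_nil]

theorem pprodRange_of_le (cs : ℕ → α) {k ℓ : ℕ} (h : ℓ ≤ k) : pprodRange cs k ℓ = 1 := by
  simp [pprodRange, Nat.sub_eq_zero_of_le h]

theorem pprodRange_succ (cs : ℕ → α) {k ℓ : ℕ} (h : k ≤ ℓ) :
    pprodRange cs k (ℓ + 1) = cs (ℓ + 1) * pprodRange cs k ℓ := by
  rw [pprodRange, Nat.sub_add_comm h, List.range_succ, List.foldl_append, List.foldl_cons,
    List.foldl_nil, List.foldl_mul_left_eq_foldl_one_mul, mul_one, pprodRange,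
    show k + 1 + (ℓ - k) = ℓ + 1 by omega]

theorem pprodRange_eq_pprodRange_succ_mul (cs : ℕ → α) {k ℓ : ℕ} (h : k < ℓ) :
    pprodRange cs k ℓ = pprodRange cs (k + 1) ℓ * cs (k + 1) := by
  induction ℓ, h using Nat.le_induction with
  | base => simp [pprodRange_succ cs le_rfl, pprodRange_of_le]
  | succ ℓ hkℓ ih => rw [pprodRange_succ cs (by omega), ih, pprodRange_succ cs hkℓ, mul_assoc]

theorem pprodRange_congr {cs cs' : ℕ → α} {k ℓ : ℕ} (h : ∀ i, k < i → i ≤ ℓ → cs i = cs' i) :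
    pprodRange cs k ℓ = pprodRange cs' k ℓ := by
  refine List.foldl_ext _ _ _ fun _ j hj => ?_
  rw [h (k + 1 + j) (by omega) (by have := List.mem_range.1 hj; omega)]

theorem pprodRange_mem {S : Type*} [SetLike S α] [SubmonoidClass S α] {K : S} {cs : ℕ → α}
    {k ℓ : ℕ} (h : ∀ i, k < i → i ≤ ℓ → cs i ∈ K) : pprodRange cs k ℓ ∈ K := by
  induction ℓ with
  | zero => simp [pprodRange_of_le, one_mem]
  | succ ℓ ih =>
    rcases le_or_gt k ℓ with hkℓ | hℓk
    · rw [pprodRange_succ cs hkℓ]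
      exact mul_mem (h _ (by omega) le_rfl) (ih fun i hi hiℓ => h i hi (by omega))
    · rw [pprodRange_of_le cs hℓk]
      exact one_mem K

end Products

def IsLeaderSeq {α : Type*} (CL : ℕ → Set α) (k ℓ : ℕ) (cs : ℕ → α) : Prop :=
  ∀ i, k < i → i ≤ ℓ → cs i ∈ CL i

variable {V : Type*} [NormedAddCommGroup V] [InnerProductSpace ℂ V] {x₀ : V}

theorem self_mem_FR (H : Subgroup (Iso V)) : x₀ ∈ FR x₀ H := by
  intro h hh hstab
  rw [sub_self, norm_zero, norm_pos_iff, sub_ne_zero]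
  exact fun hfix => hstab ⟨hh, hfix⟩

theorem Minimal.inv_apply_mem_FR {H : Subgroup (Iso V)} {c : Iso V} (hc : Minimal x₀ H c) :
    c⁻¹ x₀ ∈ FR x₀ H := by
  obtain ⟨y, hy, rfl⟩ := hc
  simpa using hy

theorem exists_isLeaderSeq_pprodRange_eq {Gs : ℕ → Subgroup (Iso V)} {CL : ℕ → Set (Iso V)}
    (hG0 : Gs 0 = ⊥) {j : ℕ} (hcover : ∀ k < j, ∀ a ∈ Gs (k + 1), ∃ c ∈ CL (k + 1), c⁻¹ * a ∈ Gs k)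
    {a : Iso V} (ha : a ∈ Gs j) : ∃ cs, IsLeaderSeq CL 0 j cs ∧ pprodRange cs 0 j = a := by
  induction j generalizing a with
  | zero =>
    rw [hG0, Subgroup.mem_bot] at ha
    exact ⟨1, fun i hi hij => by omega, by rw [pprodRange_of_le _ le_rfl, ha]⟩
  | succ j ih =>
    obtain ⟨c, hc, hca⟩ := hcover j (by omega) a ha
    obtain ⟨cs, hcs, hcsa⟩ := ih (fun k hk => hcover k (by omega)) hca
    refine ⟨Function.update cs (j + 1) c, fun i hi hij => ?_, ?_⟩
    · rcases eq_or_ne i (j + 1) with rfl | hne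
      · simpa using hc
      · simpa [hne] using hcs i hi (by omega)
    · have hlow : pprodRange (Function.update cs (j + 1) c) 0 j = pprodRange cs 0 j :=
        pprodRange_congr fun i _ hij => Function.update_of_ne (show i ≠ j + 1 by omega) c cs
      rw [pprodRange_succ _ (Nat.zero_le j), Function.update_self, hlow, hcsa,
        mul_inv_cancel_left]

theorem eq_of_norm_sub_le_of_inv_apply_mem_FR {G H : Subgroup (Iso V)} (hHG : H ≤ G)
    (hfull : Stab x₀ G = {1}) {δ : ℝ}
    (hgap : ∀ a ∈ G, ∀ b ∈ G, ‖a x₀ - x₀‖ < ‖b x₀ - x₀‖ → ‖a x₀ - x₀‖ + δ ≤ ‖b x₀ - x₀‖)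
    {c e d : Iso V} (hc : c ∈ G) (hcFR : c⁻¹ x₀ ∈ FR x₀ H) (he : e ∈ H) (hd : d ∈ H) {z : V}
    (hz : ‖z - (c * e)⁻¹ x₀‖ < δ / 2) (hgreedy : ‖d z - x₀‖ ≤ ‖e z - x₀‖) : d = e := by
  by_contra hne
  have hdeH : d * e⁻¹ ∈ H := mul_mem hd (inv_mem he)
  have hde : d * e⁻¹ ∉ Stab x₀ H := fun hstab => by
    have : d * e⁻¹ ∈ Stab x₀ G := ⟨hHG hstab.1, hstab.2⟩
    rw [hfull, mem_singleton_iff, mul_inv_eq_one] at this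
    exact hne this
  have hlt := hgap _ (inv_mem hc) _ (mul_mem (hHG hdeH) (inv_mem hc)) (hcFR _ hdeH hde)
  have happly : ∀ f : Iso V, f ((c * e)⁻¹ x₀) = (f * e⁻¹ * c⁻¹) x₀ := fun f => by
    simp [mul_inv_rev, mul_assoc]
  have := norm_sub_lt_norm_sub_of_add_le e.isometry d.isometry hz
    (by simpa only [happly, mul_inv_cancel, one_mul] using hlt)
  linarith

section Decoding

variable {G : Subgroup (Iso V)} {Gs : ℕ → Subgroup (Iso V)} {CL : ℕ → Set (Iso V)} {m : ℕ}

theorem inv_pprodRange_apply_mem_FR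
    (hmin : ∀ k, 1 ≤ k → k < m → ∀ cs : ℕ → Iso V,
      IsLeaderSeq CL k m cs → Minimal x₀ (Gs k) (pprodRange cs k m))
    {k : ℕ} (hk : 1 ≤ k) (hkm : k ≤ m) {cs : ℕ → Iso V} (hcs : IsLeaderSeq CL k m cs) :
    (pprodRange cs k m)⁻¹ x₀ ∈ FR x₀ (Gs k) := by
  rcases hkm.lt_or_eq with hkm | rfl
  · exact (hmin k hk hkm cs hcs).inv_apply_mem_FR
  · rw [pprodRange_of_le cs le_rfl, inv_one]
    exact self_mem_FR _

theorem IsGreedyRun.exists_pprodRange_mul_pprod_eq (hfull : Stab x₀ G = {1}) {δ : ℝ}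
    (hgap : ∀ a ∈ G, ∀ b ∈ G, ‖a x₀ - x₀‖ < ‖b x₀ - x₀‖ → ‖a x₀ - x₀‖ + δ ≤ ‖b x₀ - x₀‖)
    (hGsG : ∀ i ≤ m, Gs i ≤ G) (hCLGs : ∀ k < m, CL (k + 1) ⊆ Gs (k + 1))
    (hmin : ∀ k, 1 ≤ k → k < m → ∀ cs : ℕ → Iso V,
      IsLeaderSeq CL k m cs → Minimal x₀ (Gs k) (pprodRange cs k m))
    {g : Iso V} {cs : ℕ → Iso V} (hcs : IsLeaderSeq CL 0 m cs) (hg : pprodRange cs 0 m = g)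
    {r : V} (hr : ‖r - g⁻¹ x₀‖ < δ / 2) {d : ℕ → Iso V} (hrun : IsGreedyRun x₀ CL m r d)
    {k : ℕ} (hk : k ≤ m) : ∃ cs', IsLeaderSeq CL k m cs' ∧ pprodRange cs' k m * pprod d k = g := by
  induction k with
  | zero => exact ⟨cs, hcs, by rw [pprod_zero, mul_one, hg]⟩
  | succ k ih =>
    obtain ⟨cs', hcs', hg'⟩ := ih (by omega)
    have hkm : k < m := by omega
    have hpeel := pprodRange_eq_pprodRange_succ_mul cs' hkm
    have hcG : pprodRange cs' (k + 1) m ∈ G := pprodRange_mem fun i hi him => by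
      obtain ⟨j, rfl⟩ : ∃ j, i = j + 1 := ⟨i - 1, by omega⟩
      exact hGsG _ him (hCLGs j (by omega) (hcs' _ (by omega) him))
    have hz : ‖pprod d k r - (pprodRange cs' k m)⁻¹ x₀‖ < δ / 2 := by
      have : (pprodRange cs' k m)⁻¹ = pprod d k * g⁻¹ := by rw [← hg']; group
      rwa [this, LinearIsometryEquiv.coe_mul, Function.comp_apply, ← map_sub,
        LinearIsometryEquiv.norm_map]
    have hdk : d (k + 1) = cs' (k + 1) :=
      eq_of_norm_sub_le_of_inv_apply_mem_FR (hGsG _ hk) hfull hgap hcG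
        (inv_pprodRange_apply_mem_FR hmin (by omega) hk fun i hi => hcs' i (by omega))
        (hCLGs k hkm (hcs' _ (by omega) hk)) (hCLGs k hkm (hrun k hkm).1) (hpeel ▸ hz)
        ((hrun k hkm).2 _ (hcs' _ (by omega) hk))
    refine ⟨cs', fun i hi => hcs' i (by omega), ?_⟩
    rw [pprod_succ, hdk, ← mul_assoc, ← hpeel, hg']

end Decoding

end GroupCode

open GroupCode in
theorem correct_decoding_with_noise_of_minimal_induced_general
    {V : Type*} [NormedAddCommGroup V] [InnerProductSpace ℂ V]
    (G : Subgroup (Iso V)) (hGfin : (G : Set (Iso V)).Finite)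
    (x₀ : V)
    (hfull : Stab x₀ G = ({1} : Set (Iso V)))
    (m : ℕ)
    (Gs : ℕ → Subgroup (Iso V)) (CL : ℕ → Set (Iso V))
    (hG0 : Gs 0 = ⊥) (hGm : Gs m = G)
    (hlt : ∀ k < m, Gs k < Gs (k + 1))
    (hCL : ∀ k < m, IsCosetLeaders (Gs k) (Gs (k + 1)) (CL (k + 1)))
    (hmin : ∀ k, 1 ≤ k → k < m → ∀ cs : ℕ → Iso V,
      (∀ i, k < i → i ≤ m → cs i ∈ CL i) → Minimal x₀ (Gs k) (pprodRange cs k m)) :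
    ∃ δ > (0 : ℝ), ∀ g ∈ G, ∀ r : V, ‖r - g⁻¹ x₀‖ < δ / 2 →
      ∀ d : ℕ → Iso V, IsGreedyRun x₀ CL m r d → pprod d m = g := by
  obtain ⟨δ, hδ, hgap⟩ := (hGfin.image fun a : Iso V => ‖a x₀ - x₀‖).exists_pos_add_le_of_lt
  simp only [Set.forall_mem_image, SetLike.mem_coe] at hgap
  have hGsG : ∀ i ≤ m, Gs i ≤ G := fun i hi =>
    hGm ▸ le_of_forall_le_succ_of_le (fun k hk => (hlt k hk).le) hi
  refine ⟨δ, hδ, fun g hg r hr d hrun => ?_⟩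
  obtain ⟨cs, hcs, hcsg⟩ := exists_isLeaderSeq_pprodRange_eq hG0
    (fun k hk a ha => ((hCL k hk).2.2 a ha).exists) (hGm ▸ hg : g ∈ Gs m)
  obtain ⟨cs', -, hg'⟩ := hrun.exists_pprodRange_mul_pprod_eq hfull hgap hGsG
    (fun k hk => (hCL k hk).1) hmin hcs hcsg hr le_rfl
  rwa [pprodRange_of_le cs' le_rfl, one_mul] at hg'

open GroupCode in
/-- **Theorem (Statement 3).** If all induced coset leaders for `G` over each `G_k` are
minimal, then the subgroup decoding algorithm decodes correctly with some noise. -/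
theorem correct_decoding_with_noise_of_minimal_induced
    {V : Type*} [NormedAddCommGroup V] [InnerProductSpace ℂ V] [FiniteDimensional ℂ V]
    (G : Subgroup (Iso V)) (hGfin : (G : Set (Iso V)).Finite)
    (x₀ : V) (hx₀ : ‖x₀‖ = 1)
    (hfull : Stab x₀ G = ({1} : Set (Iso V)))
    (hnontriv : ∃ g ∈ G, g x₀ ≠ x₀)
    (m : ℕ) (hm : 1 ≤ m)
    (Gs : ℕ → Subgroup (Iso V)) (CL : ℕ → Set (Iso V))
    (hG0 : Gs 0 = ⊥) (hGm : Gs m = G)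
    (hlt : ∀ k < m, Gs k < Gs (k + 1))
    (hCL : ∀ k < m, IsCosetLeaders (Gs k) (Gs (k + 1)) (CL (k + 1)))
    (hmin : ∀ k, 1 ≤ k → k < m → ∀ cs : ℕ → Iso V,
      (∀ i, k < i → i ≤ m → cs i ∈ CL i) → Minimal x₀ (Gs k) (pprodRange cs k m)) :
    ∃ δ > (0 : ℝ), ∀ g ∈ G, ∀ r : V, ‖r - g⁻¹ x₀‖ < δ / 2 →
      ∀ d : ℕ → Iso V, IsGreedyRun x₀ CL m r d → pprod d m = g :=
  correct_decoding_with_noise_of_minimal_induced_general G hGfin x₀ hfull m Gs CL hG0 hGm hlt hCL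
    hmin
end
end

section
/- Assume x₀ has full orbit under G. For subgroups H ≤ K of G, if a set of coset leaders CL(K/H) is greed compatible, then every coset leader c ∈ CL(K/H) is minimal. -/
open Set
open scoped Pointwise

noncomputable section

/-! Within the coset `cH` pick `g` for which `p = g⁻¹ x₀` is closest to `x₀` in its `H`-orbit.
Such a `p` lies on the boundary of `FR(H)`, and `y = p + t (x₀ - p)` lies in `FR(H)` for every
`0 < t ≤ 1`. Greed compatibility moves `y` into `FR(K)` by some leader `c'`. If `c' ≠ g`, then
`c' y` is closer to `x₀` than `g y`, which is at distance `t ‖p - x₀‖` from `g p = x₀`; so `c' p`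
is within `2 t ‖p - x₀‖` of `x₀`, impossible for small `t` since the orbit `K x₀` is finite and
`c' p ≠ x₀` by freeness. Hence `g = c' ∈ CL`, so `g = c`; applied to every minimizer, this shows
that `c⁻¹ x₀` is the unique closest point of its `H`-orbit, i.e. `c⁻¹ x₀ ∈ FR(H)`. -/

section

open AffineMap

theorem Set.Finite.exists_pos_forall_le_dist {X : Type*} [MetricSpace X] {s : Set X}
    (hs : s.Finite) (x : X) : ∃ δ > 0, ∀ y ∈ s, y ≠ x → δ ≤ dist y x := by
  obtain ⟨δ, hδ, hball⟩ :=
    Metric.isOpen_iff.mp (hs.sdiff (t := {x})).isClosed.isOpen_compl x (by simp)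
  exact ⟨δ, hδ, fun y hy hyx => not_lt.mp fun hlt => hball hlt ⟨hy, hyx⟩⟩

theorem norm_lineMap_sub_lt_norm_lineMap_sub {E : Type*} [NormedAddCommGroup E]
    [InnerProductSpace ℝ E] {p x v : E} (hp : ‖p - x‖ ≤ ‖p - v‖) (hv : v ≠ x) {t : ℝ}
    (ht₀ : 0 < t) (ht₁ : t ≤ 1) : ‖lineMap p x t - x‖ < ‖lineMap p x t - v‖ := by
  have hx : lineMap p x t - x = (1 - t) • (p - x) := by
    rw [lineMap_apply_module]; module
  have hv' : lineMap p x t - v = (1 - t) • (p - x) - (v - x) := by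
    rw [← hx]; abel
  rw [show p - v = (p - x) - (v - x) by abel] at hp
  have hb : 0 < ‖v - x‖ := norm_pos_iff.mpr (sub_ne_zero.mpr hv)
  have hp2 := (sq_le_sq₀ (norm_nonneg _) (norm_nonneg _)).mpr hp
  rw [norm_sub_sq_real (p - x) (v - x)] at hp2
  rw [← sq_lt_sq₀ (norm_nonneg _) (norm_nonneg _), hv', hx, norm_sub_sq_real, norm_smul,
    real_inner_smul_left, Real.norm_eq_abs, abs_of_nonneg (sub_nonneg.mpr ht₁)]
  nlinarith [mul_nonneg (sub_nonneg.mpr ht₁) (sub_nonneg.mpr hp2), mul_pos ht₀ (pow_pos hb 2)]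

namespace GroupCode

variable {V : Type*} [NormedAddCommGroup V] [InnerProductSpace ℂ V] {x₀ : V}
  {H K : Subgroup (Iso V)} {CL : Set (Iso V)}

theorem norm_apply_sub_eq_norm_sub_inv_apply (a : Iso V) (x y : V) :
    ‖a x - y‖ = ‖x - a⁻¹ y‖ := by
  rw [← a.norm_map (x - a⁻¹ y), map_sub, LinearIsometryEquiv.coe_inv, a.apply_symm_apply]

theorem minimal_iff_inv_apply_mem_FR {c : Iso V} : Minimal x₀ H c ↔ c⁻¹ x₀ ∈ FR x₀ H := by
  rw [Minimal, LinearIsometryEquiv.image_eq_preimage_symm, LinearIsometryEquiv.coe_inv]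
  rfl

theorem lineMap_mem_FR {p : V} (hp : ∀ h ∈ H, ‖p - x₀‖ ≤ ‖h p - x₀‖) {t : ℝ} (ht₀ : 0 < t)
    (ht₁ : t ≤ 1) : lineMap p x₀ t ∈ FR x₀ H := by
  let _ : InnerProductSpace ℝ V := InnerProductSpace.complexToReal
  intro h hh hhS
  have hv : h⁻¹ x₀ ≠ x₀ := fun hx => hhS ⟨hh, by simpa using (congrArg h hx).symm⟩
  rw [norm_apply_sub_eq_norm_sub_inv_apply]
  refine norm_lineMap_sub_lt_norm_lineMap_sub ?_ hv ht₀ ht₁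
  rw [← norm_apply_sub_eq_norm_sub_inv_apply]
  exact hp h hh

theorem mul_inv_apply_ne (hfree : ∀ k ∈ K, k x₀ = x₀ → k = 1) {a b : Iso V} (ha : a ∈ K)
    (hb : b ∈ K) (hab : a ≠ b) : (a * b⁻¹) x₀ ≠ x₀ :=
  fun h => hab (mul_inv_eq_one.mp (hfree _ (K.mul_mem ha (K.inv_mem hb)) h))

theorem mem_of_greedCompatible (hKfin : (K : Set (Iso V)).Finite)
    (hfree : ∀ k ∈ K, k x₀ = x₀ → k = 1) (hCL : CL ⊆ K) (hgc : GreedCompatible x₀ H K CL)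
    {g : Iso V} {p : V} (hg : g ∈ K) (hgp : g p = x₀)
    (hp : ∀ h ∈ H, ‖p - x₀‖ ≤ ‖h p - x₀‖) : g ∈ CL := by
  obtain ⟨δ, hδ, hδle⟩ := (hKfin.image fun k : Iso V => k x₀).exists_pos_forall_le_dist x₀
  set D := ‖p - x₀‖
  have hD : 0 ≤ D := norm_nonneg _
  set t := δ / (δ + 2 * D)
  have ht₀ : 0 < t := by positivity
  have ht₁ : t ≤ 1 := div_le_one_of_le₀ (by linarith) (by positivity)
  have htD : 2 * (t * D) < δ := by
    rw [div_mul_eq_mul_div, mul_div_assoc', div_lt_iff₀ (by positivity)]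
    nlinarith
  set y := lineMap p x₀ t
  have hyp : ‖y - p‖ = t * D := by
    rw [← dist_eq_norm, dist_lineMap_left, Real.norm_of_nonneg ht₀.le, dist_eq_norm]
  obtain ⟨c, hc, hcy⟩ := hgc y (lineMap_mem_FR hp ht₀ ht₁)
  suffices c = g from this ▸ hc
  by_contra hne
  have hcK := hCL hc
  have hcy_lt : ‖c y - x₀‖ < t * D := by
    calc ‖c y - x₀‖ < ‖(g * c⁻¹) (c y) - x₀‖ := hcy _ (K.mul_mem hg (K.inv_mem hcK))
          fun h => mul_inv_apply_ne hfree hg hcK (Ne.symm hne) h.2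
      _ = ‖y - p‖ := by rw [← hgp, ← g.norm_map (y - p), map_sub]; simp
      _ = t * D := hyp
  have hcp : δ ≤ ‖c p - x₀‖ := by
    have hcp_eq : (c * g⁻¹) x₀ = c p := by simp [← hgp]
    rw [← dist_eq_norm, ← hcp_eq]
    exact hδle _ ⟨_, K.mul_mem hcK (K.inv_mem hg), rfl⟩ (mul_inv_apply_ne hfree hcK hg hne)
  have hcpy : ‖c p - c y‖ = t * D := by
    rw [← map_sub, c.norm_map, norm_sub_rev, hyp]
  linarith [norm_sub_le_norm_sub_add_norm_sub (c p) (c y) x₀]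

theorem eq_one_of_forall_norm_sub_le (hKfin : (K : Set (Iso V)).Finite)
    (hfree : ∀ k ∈ K, k x₀ = x₀ → k = 1) (hHK : H ≤ K) (hCL : IsCosetLeaders H K CL)
    (hgc : GreedCompatible x₀ H K CL) {c h : Iso V} (hc : c ∈ CL) (hh : h ∈ H)
    (hmin : ∀ k ∈ H, ‖h (c⁻¹ x₀) - x₀‖ ≤ ‖k (c⁻¹ x₀) - x₀‖) : h = 1 := by
  have hcK := hCL.1 hc
  have hch : c * h⁻¹ ∈ CL := by
    refine mem_of_greedCompatible hKfin hfree hCL.1 hgc (K.mul_mem hcK (K.inv_mem (hHK hh)))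
      (p := h (c⁻¹ x₀)) (by simp) fun h' hh' => ?_
    simpa using hmin _ (H.mul_mem hh' hh)
  simpa using (hCL.2.2 c hcK).unique ⟨hch, by simpa [mul_assoc] using hh⟩ ⟨hc, by simp⟩

theorem minimal_of_mem_cosetLeaders (hKfin : (K : Set (Iso V)).Finite)
    (hfree : ∀ k ∈ K, k x₀ = x₀ → k = 1) (hHK : H ≤ K) (hCL : IsCosetLeaders H K CL)
    (hgc : GreedCompatible x₀ H K CL) {c : Iso V} (hc : c ∈ CL) : Minimal x₀ H c := by
  obtain ⟨h₀, hh₀, hmin⟩ := Set.exists_min_image (H : Set (Iso V))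
    (fun h : Iso V => ‖h (c⁻¹ x₀) - x₀‖) (hKfin.subset hHK) ⟨1, H.one_mem⟩
  obtain rfl := eq_one_of_forall_norm_sub_le hKfin hfree hHK hCL hgc hc hh₀ hmin
  rw [minimal_iff_inv_apply_mem_FR]
  intro h hh hhS
  by_contra hle
  refine hhS ⟨hh, ?_⟩
  rw [eq_one_of_forall_norm_sub_le hKfin hfree hHK hCL hgc hc hh
    fun k hk => (not_lt.mp hle).trans (hmin k hk)]
  rfl

end GroupCode

end

open GroupCode in
theorem minimal_of_greedCompatible_general
    {V : Type*} [NormedAddCommGroup V] [InnerProductSpace ℂ V]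
    (G : Subgroup (Iso V)) (hGfin : (G : Set (Iso V)).Finite)
    (x₀ : V)
    (hfull : Stab x₀ G = ({1} : Set (Iso V)))
    (H K : Subgroup (Iso V)) (hHK : H ≤ K) (hKG : K ≤ G)
    (CL : Set (Iso V)) (hCL : IsCosetLeaders H K CL)
    (hgc : GreedCompatible x₀ H K CL) :
    ∀ c ∈ CL, Minimal x₀ H c := by
  have hfree : ∀ k ∈ K, k x₀ = x₀ → k = 1 := fun k hk hkx => by
    have hk : k ∈ Stab x₀ G := ⟨hKG hk, hkx⟩
    rwa [hfull] at hk
  exact fun c => minimal_of_mem_cosetLeaders (hGfin.subset hKG) hfree hHK hCL hgc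

open GroupCode in
/-- **Theorem (Statement 8).** If a set of coset leaders is greed compatible, then every
coset leader in it is minimal. -/
theorem minimal_of_greedCompatible
    {V : Type*} [NormedAddCommGroup V] [InnerProductSpace ℂ V] [FiniteDimensional ℂ V]
    (G : Subgroup (Iso V)) (hGfin : (G : Set (Iso V)).Finite)
    (x₀ : V) (hx₀ : ‖x₀‖ = 1)
    (hfull : Stab x₀ G = ({1} : Set (Iso V)))
    (H K : Subgroup (Iso V)) (hHK : H ≤ K) (hKG : K ≤ G)
    (CL : Set (Iso V)) (hCL : IsCosetLeaders H K CL)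
    (hgc : GreedCompatible x₀ H K CL) :
    ∀ c ∈ CL, Minimal x₀ H c :=
  minimal_of_greedCompatible_general G hGfin x₀ hfull H K hHK hKG CL hCL hgc
end
end
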